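/- arXiv:1003.1094 — 2 statements merged into one kernel-verified Lean document; each statement's English description precedes it below -/
import Mathlib

section
/- Every primitive positive definite binary quadratic form aX² + bXY + cY² over ℤ is properly equivalent to a unique reduced form, where [a,b,c] is reduced if |b| ≤ a ≤ c, and b ≥ 0 whenever |b| = a or a = c. -/
/-- The binary quadratic form `[a,b,c] = aX² + bXY + cY²` evaluated at `(x,y)`. -/
def evalQF (f : ℤ × ℤ × ℤ) (x y : ℤ) : ℤ :=
  f.1 * x ^ 2 + f.2.1 * x * y + f.2.2 * y ^ 2

/-- The discriminant `b² - 4ac` of the form `[a,b,c]`. -/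
def discQF (f : ℤ × ℤ × ℤ) : ℤ := f.2.1 ^ 2 - 4 * f.1 * f.2.2

/-- `[a,b,c]` is primitive if `gcd(a,b,c) = 1`. -/
def IsPrimitiveQF (f : ℤ × ℤ × ℤ) : Prop := Int.gcd (Int.gcd f.1 f.2.1) f.2.2 = 1

/-- `[a,b,c]` is positive definite if `a > 0` and `b² - 4ac < 0`. -/
def IsPosDefQF (f : ℤ × ℤ × ℤ) : Prop := 0 < f.1 ∧ discQF f < 0

/-- `[a,b,c]` is reduced if `|b| ≤ a ≤ c`, and `b ≥ 0` whenever `|b| = a` or `a = c`. -/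
def IsReducedQF (f : ℤ × ℤ × ℤ) : Prop :=
  |f.2.1| ≤ f.1 ∧ f.1 ≤ f.2.2 ∧ ((|f.2.1| = f.1 ∨ f.1 = f.2.2) → 0 ≤ f.2.1)

/-- `f` and `g` are properly equivalent if `g` is obtained from `f` by an `SL₂(ℤ)`
change of variables. -/
def ProperEquivQF (f g : ℤ × ℤ × ℤ) : Prop :=
  ∃ α β γ δ : ℤ, α * δ - β * γ = 1 ∧
    ∀ x y : ℤ, evalQF g x y = evalQF f (α * x + β * y) (γ * x + δ * y)


/-!
Existence: a translation `X ↦ X + nY` moves `b` into `(-a, a]` without changing `a`; if then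
`c < a`, the swap `[a, b, c] ↦ [c, -b, a]` lowers the leading coefficient, so the process ends
at a reduced form.

Uniqueness: for a reduced form, `f(x, y) ≥ a + c - |b| ≥ c` whenever `xy ≠ 0`, so `a` is the
least value of `f` on nonzero vectors and `c` its least value with `y ≠ 0`. Two equivalent reduced
forms therefore share `a` and `c`, hence `b²` by the discriminant. The sign conventions exclude
`b' = -b ≠ 0` on the boundary, and in the strict case `|b| < a < c` the value `a` is attained only
at `(±1, 0)`, so the transformation is a translation, which changes `b` by a multiple of `2a`.
-/

theorem ProperEquivQF.symm {f g : ℤ × ℤ × ℤ} (h : ProperEquivQF f g) : ProperEquivQF g f := by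
  obtain ⟨α, β, γ, δ, hdet, heval⟩ := h
  refine ⟨δ, -β, -γ, α, by linear_combination hdet, fun x y => ?_⟩
  have hx : α * (δ * x + -β * y) + β * (-γ * x + α * y) = x := by linear_combination x * hdet
  have hy : γ * (δ * x + -β * y) + δ * (-γ * x + α * y) = y := by linear_combination y * hdet
  rw [heval, hx, hy]

theorem ProperEquivQF.trans {f g h : ℤ × ℤ × ℤ} (hfg : ProperEquivQF f g)
    (hgh : ProperEquivQF g h) : ProperEquivQF f h := by
  obtain ⟨α, β, γ, δ, hdet, heval⟩ := hfg
  obtain ⟨α', β', γ', δ', hdet', heval'⟩ := hgh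
  refine ⟨α * α' + β * γ', α * β' + β * δ', γ * α' + δ * γ', γ * β' + δ * δ', ?_, fun x y => ?_⟩
  · linear_combination (α' * δ' - β' * γ') * hdet + hdet'
  · rw [heval', heval]; ring_nf

theorem properEquivQF_refl (f : ℤ × ℤ × ℤ) : ProperEquivQF f f :=
  ⟨1, 0, 0, 1, by ring, fun x y => by simp⟩

theorem properEquivQF_translate (a b c n : ℤ) :
    ProperEquivQF (a, b, c) (a, b + 2 * a * n, c + b * n + a * n ^ 2) :=
  ⟨1, n, 0, 1, by ring, fun x y => by simp only [evalQF]; ring⟩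

theorem properEquivQF_swap (a b c : ℤ) : ProperEquivQF (a, b, c) (c, -b, a) :=
  ⟨0, -1, 1, 0, by ring, fun x y => by simp only [evalQF]; ring⟩

theorem ProperEquivQF.exists_coeffs {f g : ℤ × ℤ × ℤ} (h : ProperEquivQF f g) :
    ∃ α β γ δ : ℤ, α * δ - β * γ = 1 ∧ g.1 = evalQF f α γ ∧
      g.2.1 = 2 * f.1 * α * β + f.2.1 * (α * δ + β * γ) + 2 * f.2.2 * γ * δ ∧
      g.2.2 = evalQF f β δ := by
  obtain ⟨α, β, γ, δ, hdet, heval⟩ := h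
  have h10 := heval 1 0
  have h01 := heval 0 1
  have h11 := heval 1 1
  simp only [evalQF] at h10 h01 h11 ⊢
  exact ⟨α, β, γ, δ, hdet, by linear_combination h10,
    by linear_combination h11 - h10 - h01, by linear_combination h01⟩

theorem ProperEquivQF.discQF_eq {f g : ℤ × ℤ × ℤ} (h : ProperEquivQF f g) :
    discQF g = discQF f := by
  obtain ⟨α, β, γ, δ, hdet, h1, h2, h3⟩ := h.exists_coeffs
  simp only [discQF, evalQF] at h1 h3 ⊢
  rw [h1, h2, h3]
  linear_combination (f.2.1 ^ 2 - 4 * f.1 * f.2.2) * (α * δ - β * γ + 1) * hdet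

theorem ne_zero_or_ne_zero_of_mul_sub_mul_eq_one {α β γ δ : ℤ} (h : α * δ - β * γ = 1) :
    α ≠ 0 ∨ γ ≠ 0 := by
  by_contra! h0
  simp [h0.1, h0.2] at h

theorem IsPosDefQF.evalQF_pos {f : ℤ × ℤ × ℤ} (hf : IsPosDefQF f) {x y : ℤ}
    (hxy : x ≠ 0 ∨ y ≠ 0) : 0 < evalQF f x y := by
  obtain ⟨a, b, c⟩ := f
  obtain ⟨ha, hdisc⟩ := hf
  simp only [discQF] at ha hdisc
  have hsq : 4 * a * evalQF (a, b, c) x y =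
      (2 * a * x + b * y) ^ 2 - (b ^ 2 - 4 * a * c) * y ^ 2 := by
    simp only [evalQF]; ring
  rcases eq_or_ne y 0 with rfl | hy
  · have hx : x ≠ 0 := by simpa using hxy
    have : 0 < x ^ 2 := by positivity
    simp only [evalQF]; nlinarith
  · have : 0 < y ^ 2 := by positivity
    nlinarith [sq_nonneg (2 * a * x + b * y)]

theorem IsPosDefQF.of_properEquivQF {f g : ℤ × ℤ × ℤ} (hf : IsPosDefQF f)
    (h : ProperEquivQF f g) : IsPosDefQF g := by
  obtain ⟨α, β, γ, δ, hdet, h1, -, -⟩ := h.exists_coeffs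
  exact ⟨h1 ▸ hf.evalQF_pos (ne_zero_or_ne_zero_of_mul_sub_mul_eq_one hdet), h.discQF_eq ▸ hf.2⟩

namespace IsReducedQF

variable {g : ℤ × ℤ × ℤ} (hg : IsReducedQF g) {x y : ℤ}
include hg

theorem fst_nonneg : 0 ≤ g.1 := (abs_nonneg _).trans hg.1

theorem add_sub_abs_le_evalQF (hx : x ≠ 0) (hy : y ≠ 0) :
    g.1 + g.2.2 - |g.2.1| ≤ evalQF g x y := by
  obtain ⟨a, b, c⟩ := g
  have ha : 0 ≤ a := hg.fst_nonneg
  obtain ⟨hb, hc, -⟩ := hg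
  simp only [evalQF] at hb hc ⊢
  have hu : 1 ≤ |x| ^ 2 := one_le_pow₀ (Int.one_le_abs hx)
  have hv : 1 ≤ |y| ^ 2 := one_le_pow₀ (Int.one_le_abs hy)
  have hbxy : -(|b| * |x| * |y|) ≤ b * x * y := by
    rw [← abs_mul, ← abs_mul]; exact neg_abs_le _
  rw [← sq_abs x, ← sq_abs y]
  -- with `u = |x|, v = |y| ≥ 1`, the cross term `-|b| u v` is absorbed by the larger of `u², v²`
  rcases le_total |x| |y| with hxy | hxy
  · have : 0 ≤ |b| * |y| * (|y| - |x|) := by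
      have := abs_nonneg b; have := abs_nonneg y; have := sub_nonneg.2 hxy; positivity
    nlinarith [mul_le_mul_of_nonneg_left hu ha,
      mul_le_mul_of_nonneg_left hv (sub_nonneg.2 (hb.trans hc))]
  · have : 0 ≤ |b| * |x| * (|x| - |y|) := by
      have := abs_nonneg b; have := abs_nonneg x; have := sub_nonneg.2 hxy; positivity
    nlinarith [mul_le_mul_of_nonneg_left hu (sub_nonneg.2 hb),
      mul_le_mul_of_nonneg_left hv (ha.trans hc)]

theorem snd_snd_le_evalQF (hy : y ≠ 0) : g.2.2 ≤ evalQF g x y := by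
  rcases eq_or_ne x 0 with rfl | hx
  · have hv : 1 ≤ y ^ 2 := (one_le_sq_iff_one_le_abs y).2 (Int.one_le_abs hy)
    simp only [evalQF]
    nlinarith [hg.fst_nonneg.trans hg.2.1]
  · linarith [hg.add_sub_abs_le_evalQF hx hy, hg.1]

theorem fst_le_evalQF (hxy : x ≠ 0 ∨ y ≠ 0) : g.1 ≤ evalQF g x y := by
  rcases eq_or_ne y 0 with rfl | hy
  · have hx : x ≠ 0 := by simpa using hxy
    have hu : 1 ≤ x ^ 2 := (one_le_sq_iff_one_le_abs x).2 (Int.one_le_abs hx)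
    simp only [evalQF]
    nlinarith [hg.fst_nonneg]
  · exact hg.2.1.trans (hg.snd_snd_le_evalQF hy)

theorem fst_le_of_properEquivQF {g' : ℤ × ℤ × ℤ} (h : ProperEquivQF g g') : g.1 ≤ g'.1 := by
  obtain ⟨α, β, γ, δ, hdet, h1, -, -⟩ := h.exists_coeffs
  exact h1 ▸ hg.fst_le_evalQF (ne_zero_or_ne_zero_of_mul_sub_mul_eq_one hdet)

theorem snd_snd_le_of_properEquivQF {g' : ℤ × ℤ × ℤ} (hg' : IsReducedQF g')
    (h : ProperEquivQF g g') : g.2.2 ≤ g'.2.2 := by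
  obtain ⟨α, β, γ, δ, hdet, h1, -, h3⟩ := h.exists_coeffs
  rcases eq_or_ne δ 0 with rfl | hδ
  · have hγ : γ ≠ 0 := by rintro rfl; simp at hdet
    calc g.2.2 ≤ evalQF g α γ := hg.snd_snd_le_evalQF hγ
      _ = g'.1 := h1.symm
      _ ≤ g'.2.2 := hg'.2.1
  · exact h3 ▸ hg.snd_snd_le_evalQF hδ

theorem eq_of_properEquivQF {g' : ℤ × ℤ × ℤ} (hg' : IsReducedQF g')
    (h : ProperEquivQF g g') : g = g' := by
  have ha : g.1 = g'.1 :=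
    (hg.fst_le_of_properEquivQF h).antisymm (hg'.fst_le_of_properEquivQF h.symm)
  have hc : g.2.2 = g'.2.2 :=
    (hg.snd_snd_le_of_properEquivQF hg' h).antisymm (hg'.snd_snd_le_of_properEquivQF hg h.symm)
  have hb : g'.2.1 ^ 2 = g.2.1 ^ 2 := by
    have := h.discQF_eq; simp only [discQF, ha, hc] at this; linarith
  obtain ⟨a, b, c⟩ := g
  obtain ⟨a', b', c'⟩ := g'
  simp only at ha hc hb
  subst ha hc
  rcases sq_eq_sq_iff_eq_or_eq_neg.1 hb with rfl | rfl
  · rfl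
  suffices b = 0 by simp [this]
  by_cases hbd : |b| = a ∨ a = c
  · have hsign' := hg'.2.2 (by simpa only [abs_neg] using hbd)
    simp only at hsign'
    linarith [hg.2.2 hbd]
  obtain ⟨α, β, γ, δ, hdet, h1, h2, -⟩ := h.exists_coeffs
  have hba : |b| < a := lt_of_le_of_ne hg.1 (by tauto)
  have hac : a < c := lt_of_le_of_ne hg.2.1 (by tauto)
  have hγ : γ = 0 := by
    by_contra hγ
    have := hg.snd_snd_le_evalQF (x := α) hγ
    simp only at h1 this
    omega
  subst hγ
  have hb : b = -(a * (α * β)) := by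
    simp only at h2
    linarith [show 2 * b = 2 * -(a * (α * β)) by linear_combination -h2 - b * hdet]
  have ha : 0 < a := (abs_nonneg b).trans_lt hba
  have hαβ : α * β = 0 := by
    rw [hb, abs_neg, abs_mul, abs_of_pos ha] at hba
    exact Int.abs_lt_one_iff.1 (by nlinarith)
  simp [hb, hαβ]

end IsReducedQF

theorem exists_add_two_mul_mem_Ioc {a : ℤ} (ha : 0 < a) (b : ℤ) :
    ∃ n : ℤ, b + 2 * a * n ∈ Set.Ioc (-a) a := by
  refine ⟨(a - b) / (2 * a), ?_⟩
  rw [Set.mem_Ioc]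
  have hdiv := Int.mul_ediv_add_emod (a - b) (2 * a)
  have hnonneg := Int.emod_nonneg (a - b) (by positivity : 2 * a ≠ 0)
  have hlt := Int.emod_lt_of_pos (a - b) (by positivity : 0 < 2 * a)
  constructor <;> linarith

theorem exists_isReducedQF_of_mem_Ioc {a b c : ℤ} (hb : b ∈ Set.Ioc (-a) a) (hac : a ≤ c) :
    ∃ g, IsReducedQF g ∧ ProperEquivQF (a, b, c) g := by
  obtain ⟨hab, hba⟩ := hb
  by_cases hswap : a = c ∧ b < 0
  · obtain ⟨rfl, hneg⟩ := hswap
    refine ⟨(a, -b, a), ⟨?_, le_rfl, fun _ => ?_⟩, properEquivQF_swap a b a⟩ <;>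
      simp only [abs_neg, abs_of_neg hneg] <;> omega
  · refine ⟨(a, b, c), ⟨abs_le.2 ⟨hab.le, hba⟩, hac, fun h => ?_⟩, properEquivQF_refl _⟩
    simp only at h ⊢
    rcases abs_cases b with ⟨_, _⟩ | ⟨_, _⟩ <;> omega

theorem IsPosDefQF.exists_isReducedQF {f : ℤ × ℤ × ℤ} (hf : IsPosDefQF f) :
    ∃ g, IsReducedQF g ∧ ProperEquivQF f g := by
  induction hn : f.1.toNat using Nat.strong_induction_on generalizing f with
  | _ n ih =>
  obtain ⟨a, b, c⟩ := f
  have ha : 0 < a := hf.1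
  obtain ⟨m, hm⟩ := exists_add_two_mul_mem_Ioc ha b
  set c' := c + b * m + a * m ^ 2
  have htr := properEquivQF_translate a b c m
  rcases lt_or_ge c' a with hc' | hc'
  · have hsw := htr.trans (properEquivQF_swap _ _ _)
    have hpos := hf.of_properEquivQF hsw
    obtain ⟨g, hg, hequiv⟩ := ih _ (by simp only at hn hpos ⊢; have := hpos.1; omega) hpos rfl
    exact ⟨g, hg, hsw.trans hequiv⟩
  · obtain ⟨g, hg, hequiv⟩ := exists_isReducedQF_of_mem_Ioc hm hc'
    exact ⟨g, hg, htr.trans hequiv⟩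

theorem stmt_3_general (f : ℤ × ℤ × ℤ) (hpos : IsPosDefQF f) :
    ∃! g : ℤ × ℤ × ℤ, IsReducedQF g ∧ ProperEquivQF f g := by
  obtain ⟨g, hg, hfg⟩ := hpos.exists_isReducedQF
  exact ⟨g, ⟨hg, hfg⟩, fun g' ⟨hg', hfg'⟩ => hg'.eq_of_properEquivQF hg (hfg'.symm.trans hfg)⟩

/-- Every primitive positive definite binary quadratic form is properly equivalent
to a unique reduced form. -/
theorem stmt_3 (f : ℤ × ℤ × ℤ) (hprim : IsPrimitiveQF f) (hpos : IsPosDefQF f) :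
    ∃! g : ℤ × ℤ × ℤ, IsReducedQF g ∧ ProperEquivQF f g :=
  stmt_3_general f hpos
end

section
/- Conversely, if p is an odd prime not dividing D and D is a quadratic residue modulo p, then p is properly represented by some primitive binary quadratic form of discriminant D. -/
/-- If `p` is an odd prime not dividing `D`, `D ≡ 0` or `1 (mod 4)`, and `D` is a
quadratic residue modulo `p`, then `p` is properly represented by some primitive
binary quadratic form of discriminant `D`. -/
theorem stmt_9 (D : ℤ) (hD : D % 4 = 0 ∨ D % 4 = 1) (p : ℕ) (hp : p.Prime)
    (hodd : p ≠ 2) (hpD : ¬ (p : ℤ) ∣ D) (hQR : IsSquare (D : ZMod p)) :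
    ∃ f : ℤ × ℤ × ℤ, IsPrimitiveQF f ∧ discQF f = D ∧
      ∃ x y : ℤ, IsCoprime x y ∧ evalQF f x y = (p : ℤ) := by
  haveI : Fact p.Prime := ⟨hp⟩
  obtain ⟨r, hr⟩ := hQR
  set r0 : ℤ := (r.val : ℤ) with hr0
  set b : ℤ := r0 + (p : ℤ) * (D - r0) with hb
  have hbr : ((b : ℤ) : ZMod p) = r := by
    push_cast [hb, hr0]
    simp [ZMod.natCast_val, ZMod.cast_id]
  have hpdvd : (p : ℤ) ∣ b ^ 2 - D := by
    rw [← ZMod.intCast_zmod_eq_zero_iff_dvd]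
    push_cast
    rw [hbr, hr]
    ring
  have hoddp : Odd ((p : ℤ)) := by exact_mod_cast hp.odd_of_ne_two hodd
  obtain ⟨k, hk⟩ := hoddp
  have h2 : (2 : ℤ) ∣ b - D := ⟨(r0 - D) * (-k), by rw [hb, hk]; ring⟩
  obtain ⟨m, hm⟩ := h2
  have hbm : b = D + 2 * m := by omega
  have hDD4 : (4 : ℤ) ∣ D ∨ (4 : ℤ) ∣ (D - 1) := by omega
  have h4 : (4 : ℤ) ∣ b ^ 2 - D := by
    have key : b ^ 2 - D = D * (D - 1) + 4 * (D * m + m ^ 2) := by rw [hbm]; ring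
    rw [key]
    rcases hDD4 with h | h
    · exact dvd_add (Dvd.dvd.mul_right h _) (dvd_mul_right 4 _)
    · exact dvd_add (Dvd.dvd.mul_left h _) (dvd_mul_right 4 _)
  have hcop : IsCoprime (4 : ℤ) ((p : ℤ)) := by
    have h24 : Nat.Coprime 4 p :=
      Nat.Coprime.pow_left 2 ((Nat.coprime_primes Nat.prime_two hp).mpr fun h => hodd h.symm)
    exact_mod_cast Nat.isCoprime_iff_coprime.mpr h24
  have h4p : 4 * (p : ℤ) ∣ b ^ 2 - D := hcop.mul_dvd h4 hpdvd
  set c : ℤ := (b ^ 2 - D) / (4 * (p : ℤ)) with hcdef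
  have hc : 4 * (p : ℤ) * c = b ^ 2 - D := Int.mul_ediv_cancel' h4p
  have hpb : ¬ (p : ℤ) ∣ b := by
    intro h
    exact hpD (by have h2' := dvd_sub (h.pow two_ne_zero) hpdvd; simpa using h2')
  have hgcd1 : Int.gcd ((p : ℤ)) b = 1 := by
    have hnd : ¬ p ∣ b.natAbs := fun h => hpb (Int.dvd_natAbs.mp (Int.natCast_dvd_natCast.mpr h))
    simp only [Int.gcd, Int.natAbs_natCast]
    exact (Nat.Prime.coprime_iff_not_dvd hp).mpr hnd
  refine ⟨((p : ℤ), b, c), ?_, ?_, 1, 0, isCoprime_one_left, ?_⟩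
  · simp [IsPrimitiveQF, hgcd1]
  · simp only [discQF]
    linarith [hc]
  · simp [evalQF]
end
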